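/- arXiv:1311.2337 — 3 statements merged into one kernel-verified Lean document; each statement's English description precedes it below -/
import Mathlib

section
/- Fix P > 0. Let X be uniformly distributed on the sphere {x ∈ ℝⁿ : ‖x‖₂² = nP}, let Z ∼ N(0, I_{n×n}) be a standard Gaussian vector in ℝⁿ independent of X, and let Y = X + Z. Then there exist κ > 0 and N ∈ ℕ such that for all n ≥ N, Pr( | (1/n)·‖Y‖₂² − (P+1) | > n^{−1/3} ) ≤ exp(−κ·n^{1/3}). -/
/-!
Conditionally on `X = x` with `‖x‖² = nP`, the variable `‖x + Z‖²` is noncentral chi-squared,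
with moment generating function `(1 - 2t)^{-n/2} exp (t nP / (1 - 2t))`, obtained coordinatewise by
completing the square in a Gaussian integral. For `|t| ≤ 1/10` this is at most
`exp (t n(P+1) + 2n(1+2P) t²)`, so Chernoff's bound in both tails, with the optimal `t`, gives
`Pr(|‖x + Z‖² - n(P+1)| ≥ u) ≤ 2 exp (-u² / (8n(1+2P)))` for `u ≤ 2n(1+2P)/5`, uniformly in `x`.
Integrating over `X` and taking `u = n^{2/3}` gives a bound `2 exp (-c n^{1/3})`.
-/

open MeasureTheory ProbabilityTheory Real
open scoped ENNReal

noncomputable section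

/-- The standard Gaussian measure `N(0, I_{n×n})` on `ℝⁿ`. -/
def stdGaussian (n : ℕ) : Measure (Fin n → ℝ) := Measure.pi fun _ : Fin n => gaussianReal 0 1

/-- The uniform (normalized surface / Haar) distribution on the sphere
`{x ∈ ℝⁿ : ‖x‖₂² = nP}`, realized as the pushforward of the rotation-invariant standard
Gaussian measure under radial projection onto the sphere of radius `√(nP)`. -/
def sphereUniform (n : ℕ) (P : ℝ) : Measure (Fin n → ℝ) :=
  Measure.map (fun z => (Real.sqrt (n * P) / Real.sqrt (∑ i, z i ^ 2)) • z) (stdGaussian n)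

instance isProbabilityMeasure_stdGaussian (n : ℕ) : IsProbabilityMeasure (stdGaussian n) := by
  unfold _root_.stdGaussian
  infer_instance

lemma gaussianPDFReal_mul_exp_mul_sq_add {t : ℝ} (ht : t < 1 / 2) (a y : ℝ) :
    gaussianPDFReal 0 1 y * exp (t * (a + y) ^ 2) =
      (√(2 * π))⁻¹ * exp (t * a ^ 2 / (1 - 2 * t)) *
        exp (-((1 - 2 * t) / 2) * (y - 2 * t * a / (1 - 2 * t)) ^ 2) := by
  have h : 1 - 2 * t ≠ 0 := by linarith
  rw [gaussianPDFReal, NNReal.coe_one, mul_one, mul_assoc, mul_assoc, ← exp_add, ← exp_add]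
  congr 2
  field_simp
  ring

lemma integrable_exp_mul_sq_add_gaussianReal {t : ℝ} (ht : t < 1 / 2) (a : ℝ) :
    Integrable (fun y => exp (t * (a + y) ^ 2)) (gaussianReal 0 1) := by
  rw [gaussianReal_of_var_ne_zero 0 one_ne_zero, integrable_withDensity_iff_integrable_smul'
    (measurable_gaussianPDF 0 1) (ae_of_all _ fun _ => gaussianPDF_lt_top)]
  simp_rw [toReal_gaussianPDF, smul_eq_mul, gaussianPDFReal_mul_exp_mul_sq_add ht]
  exact ((integrable_exp_neg_mul_sq (by linarith)).comp_sub_right _).const_mul _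

lemma integral_exp_mul_sq_add_gaussianReal {t : ℝ} (ht : t < 1 / 2) (a : ℝ) :
    ∫ y, exp (t * (a + y) ^ 2) ∂gaussianReal 0 1 =
      √((1 - 2 * t)⁻¹) * exp (t * a ^ 2 / (1 - 2 * t)) := by
  have h : 0 < 1 - 2 * t := by linarith
  rw [integral_gaussianReal_eq_integral_smul one_ne_zero]
  simp_rw [smul_eq_mul, gaussianPDFReal_mul_exp_mul_sq_add ht, integral_const_mul,
    integral_sub_right_eq_self (fun y => exp (-((1 - 2 * t) / 2) * y ^ 2)), integral_gaussian]
  rw [mul_right_comm, ← sqrt_inv, ← sqrt_mul (by positivity)]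
  congr 2
  field_simp

lemma integrable_exp_mul_sum_sq_add_stdGaussian {n : ℕ} (x : Fin n → ℝ) {t : ℝ} (ht : t < 1 / 2) :
    Integrable (fun z => exp (t * ∑ i, (x i + z i) ^ 2)) (stdGaussian n) := by
  simp_rw [Finset.mul_sum, exp_sum]
  exact Integrable.fintype_prod (f := fun i y => exp (t * (x i + y) ^ 2))
    fun i => integrable_exp_mul_sq_add_gaussianReal ht (x i)

lemma mgf_sum_sq_add_stdGaussian {n : ℕ} (x : Fin n → ℝ) {t : ℝ} (ht : t < 1 / 2) :
    mgf (fun z => ∑ i, (x i + z i) ^ 2) (stdGaussian n) t =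
      √((1 - 2 * t)⁻¹) ^ n * exp (t * (∑ i, x i ^ 2) / (1 - 2 * t)) := by
  simp_rw [mgf, Finset.mul_sum, exp_sum]
  rw [_root_.stdGaussian, integral_fintype_prod_eq_prod (fun i y => exp (t * (x i + y) ^ 2))]
  simp_rw [integral_exp_mul_sq_add_gaussianReal ht, Finset.prod_mul_distrib, Finset.prod_const,
    Finset.card_univ, Fintype.card_fin, ← exp_sum, ← Finset.sum_div]

lemma sqrt_inv_one_sub_two_mul_le_exp {t : ℝ} (ht : |t| ≤ 1 / 10) :
    √((1 - 2 * t)⁻¹) ≤ exp (t + 2 * t ^ 2) := by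
  obtain ⟨ht₁, ht₂⟩ := abs_le.mp ht
  have hlin : 1 + (t + 2 * t ^ 2) ≤ exp (t + 2 * t ^ 2) := by
    linarith [add_one_le_exp (t + 2 * t ^ 2)]
  rw [sqrt_le_left (exp_pos _).le, inv_le_iff_one_le_mul₀ (by linarith)]
  have hpoly : 0 ≤ 1 - 6 * t - 4 * t ^ 2 - 8 * t ^ 3 := by nlinarith [sq_nonneg t]
  calc (1 : ℝ) ≤ (1 + (t + 2 * t ^ 2)) ^ 2 * (1 - 2 * t) := by
        nlinarith [mul_nonneg (sq_nonneg t) hpoly]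
    _ ≤ exp (t + 2 * t ^ 2) ^ 2 * (1 - 2 * t) := by
        gcongr
        · linarith
        · nlinarith

lemma mgf_sum_sq_add_stdGaussian_le {n : ℕ} {x : Fin n → ℝ} {P : ℝ} (hP : 0 ≤ P)
    (hx : ∑ i, x i ^ 2 = n * P) {t : ℝ} (ht : |t| ≤ 1 / 10) :
    mgf (fun z => ∑ i, (x i + z i) ^ 2) (stdGaussian n) t ≤
      exp (t * (n * (P + 1)) + 2 * n * (1 + 2 * P) * t ^ 2) := by
  obtain ⟨ht₁, ht₂⟩ := abs_le.mp ht
  have hnP : 0 ≤ (n : ℝ) * P := by positivity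
  have hdrift : t * (n * P) / (1 - 2 * t) ≤ t * (n * P) + 4 * (n * P) * t ^ 2 := by
    rw [div_le_iff₀ (by linarith)]
    nlinarith [mul_nonneg hnP (mul_nonneg (sq_nonneg t) (by linarith : (0 : ℝ) ≤ 1 - 4 * t))]
  rw [mgf_sum_sq_add_stdGaussian x (by linarith), hx]
  calc √((1 - 2 * t)⁻¹) ^ n * exp (t * (n * P) / (1 - 2 * t))
      ≤ exp (t + 2 * t ^ 2) ^ n * exp (t * (n * P) + 4 * (n * P) * t ^ 2) := by
        gcongr
        exact sqrt_inv_one_sub_two_mul_le_exp ht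
    _ = exp (t * (n * (P + 1)) + 2 * n * (1 + 2 * P) * t ^ 2) := by
        rw [← exp_nat_mul, ← exp_add]
        ring_nf

lemma measureReal_abs_sub_ge_le_of_mgf_le {Ω : Type*} [MeasurableSpace Ω] {μ : Measure Ω}
    [IsFiniteMeasure μ] {X : Ω → ℝ} {m c s : ℝ} (hs : 0 ≤ s)
    (hint : ∀ t, |t| ≤ s → Integrable (fun ω => exp (t * X ω)) μ)
    (hmgf : ∀ t, |t| ≤ s → mgf X μ t ≤ exp (t * m + c * t ^ 2)) (u : ℝ) :
    μ.real {ω | u ≤ |X ω - m|} ≤ 2 * exp (-s * u + c * s ^ 2) := by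
  have hpos : |s| ≤ s := (abs_of_nonneg hs).le
  have hneg : |-s| ≤ s := by rwa [abs_neg]
  have hsplit : {ω | u ≤ |X ω - m|} ⊆ {ω | m + u ≤ X ω} ∪ {ω | X ω ≤ m - u} := by
    intro ω hω
    rcases le_abs'.mp (show u ≤ |X ω - m| from hω) with h | h
    · exact Or.inr (show X ω ≤ m - u by linarith)
    · exact Or.inl (show m + u ≤ X ω by linarith)
  have hupper : μ.real {ω | m + u ≤ X ω} ≤ exp (-s * u + c * s ^ 2) :=
    calc _ ≤ exp (-s * (m + u)) * mgf X μ s := measure_ge_le_exp_mul_mgf _ hs (hint s hpos)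
      _ ≤ exp (-s * (m + u)) * exp (s * m + c * s ^ 2) := by gcongr; exact hmgf s hpos
      _ = exp (-s * u + c * s ^ 2) := by rw [← exp_add]; ring_nf
  have hlower : μ.real {ω | X ω ≤ m - u} ≤ exp (-s * u + c * s ^ 2) :=
    calc _ ≤ exp (- -s * (m - u)) * mgf X μ (-s) :=
          measure_le_le_exp_mul_mgf _ (by linarith) (hint (-s) hneg)
      _ ≤ exp (- -s * (m - u)) * exp (-s * m + c * (-s) ^ 2) := by gcongr; exact hmgf (-s) hneg
      _ = exp (-s * u + c * s ^ 2) := by rw [← exp_add]; ring_nf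
  calc μ.real {ω | u ≤ |X ω - m|} ≤ μ.real ({ω | m + u ≤ X ω} ∪ {ω | X ω ≤ m - u}) :=
        measureReal_mono hsplit
    _ ≤ μ.real {ω | m + u ≤ X ω} + μ.real {ω | X ω ≤ m - u} := measureReal_union_le _ _
    _ ≤ 2 * exp (-s * u + c * s ^ 2) := by linarith

lemma stdGaussian_abs_sum_sq_add_sub_ge_le {n : ℕ} {x : Fin n → ℝ} {P : ℝ} (hP : 0 ≤ P)
    (hx : ∑ i, x i ^ 2 = n * P) {u : ℝ} (hu₀ : 0 ≤ u) (hu : u ≤ 2 * n * (1 + 2 * P) / 5) :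
    stdGaussian n {z | u ≤ |∑ i, (x i + z i) ^ 2 - n * (P + 1)|} ≤
      ENNReal.ofReal (2 * exp (-u ^ 2 / (8 * n * (1 + 2 * P)))) := by
  set K := 1 + 2 * P
  -- `s` minimizes the Chernoff exponent `-s u + 2nK s²`
  set s := u / (4 * n * K)
  have hs : 0 ≤ s := by positivity
  obtain ⟨hs', hexp⟩ : s ≤ 1 / 10 ∧ -s * u + 2 * n * K * s ^ 2 = -u ^ 2 / (8 * n * K) := by
    rcases n.eq_zero_or_pos with rfl | hn
    · simp [s]
    · have hn' : (0 : ℝ) < n := Nat.cast_pos.mpr hn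
      refine ⟨by rw [div_le_iff₀ (by positivity)]; linarith, ?_⟩
      simp only [s]
      field_simp
      ring
  have hint : ∀ t, |t| ≤ s → Integrable (fun z => exp (t * ∑ i, (x i + z i) ^ 2)) (stdGaussian n) :=
    fun t ht => integrable_exp_mul_sum_sq_add_stdGaussian x (by linarith [(abs_le.mp ht).2])
  have hmgf : ∀ t, |t| ≤ s → mgf (fun z => ∑ i, (x i + z i) ^ 2) (stdGaussian n) t ≤
      exp (t * (n * (P + 1)) + 2 * n * K * t ^ 2) :=
    fun t ht => mgf_sum_sq_add_stdGaussian_le hP hx (ht.trans hs')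
  rw [← ofReal_measureReal, ← hexp]
  exact ENNReal.ofReal_le_ofReal (measureReal_abs_sub_ge_le_of_mgf_le hs hint hmgf u)

instance isProbabilityMeasure_sphereUniform (n : ℕ) (P : ℝ) :
    IsProbabilityMeasure (sphereUniform n P) :=
  Measure.isProbabilityMeasure_map (by fun_prop)

lemma ae_sum_sq_eq_sphereUniform (n : ℕ) {P : ℝ} (hP : 0 ≤ P) :
    ∀ᵐ x ∂sphereUniform n P, ∑ i, x i ^ 2 = n * P := by
  rcases n.eq_zero_or_pos with rfl | hn
  · simp
  rw [sphereUniform, ae_map_iff (by fun_prop) (measurableSet_eq_fun (by fun_prop) (by fun_prop))]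
  have : NullSingletonClass (gaussianReal 0 1) := nullSingletonClass_gaussianReal one_ne_zero
  have hcoord : ∀ᵐ z ∂Measure.pi fun _ : Fin n => gaussianReal 0 1, z ⟨0, hn⟩ ≠ 0 :=
    ae_iff.mpr (by simpa using Measure.pi_hyperplane (fun _ => gaussianReal 0 1) (⟨0, hn⟩ : Fin n) 0)
  filter_upwards [hcoord] with z hz
  have hS : 0 < ∑ i, z i ^ 2 :=
    Finset.sum_pos' (fun i _ => sq_nonneg _) ⟨⟨0, hn⟩, Finset.mem_univ _, by positivity⟩
  simp only [Pi.smul_apply, smul_eq_mul, mul_pow, div_pow, sq_sqrt hS.le,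
    sq_sqrt (by positivity : (0 : ℝ) ≤ n * P)]
  rw [← Finset.mul_sum, div_mul_cancel₀ _ hS.ne']

lemma MeasureTheory.Measure.prod_apply_le_of_ae_le {α β : Type*} [MeasurableSpace α]
    [MeasurableSpace β] {μ : Measure α} [IsProbabilityMeasure μ] {ν : Measure β} [SFinite ν]
    {s : Set (α × β)} (hs : MeasurableSet s) {c : ℝ≥0∞}
    (h : ∀ᵐ x ∂μ, ν (Prod.mk x ⁻¹' s) ≤ c) : μ.prod ν s ≤ c := by
  rw [Measure.prod_apply hs]
  calc _ ≤ ∫⁻ _, c ∂μ := lintegral_mono_ae h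
    _ = c := by simp

lemma stdGaussian_abs_mean_sum_sq_add_sub_gt_le {n : ℕ} (hn : 0 < n) {x : Fin n → ℝ} {P : ℝ}
    (hP : 0 ≤ P) (hx : ∑ i, x i ^ 2 = n * P) {ε : ℝ} (hε₀ : 0 ≤ ε) (hε : ε ≤ 2 * (1 + 2 * P) / 5) :
    stdGaussian n {z | |(1 / n : ℝ) * ∑ i, (x i + z i) ^ 2 - (P + 1)| > ε} ≤
      ENNReal.ofReal (2 * exp (-(n * ε ^ 2) / (8 * (1 + 2 * P)))) := by
  have hn' : (0 : ℝ) < n := Nat.cast_pos.mpr hn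
  have hscale : ∀ z : Fin n → ℝ, ∑ i, (x i + z i) ^ 2 - n * (P + 1) =
      n * ((1 / n : ℝ) * ∑ i, (x i + z i) ^ 2 - (P + 1)) := fun z => by field_simp
  have hsub : {z : Fin n → ℝ | |(1 / n : ℝ) * ∑ i, (x i + z i) ^ 2 - (P + 1)| > ε} ⊆
      {z | n * ε ≤ |∑ i, (x i + z i) ^ 2 - n * (P + 1)|} := fun z hz => by
    rw [Set.mem_ofPred_eq, hscale, abs_mul, abs_of_pos hn']
    exact mul_le_mul_of_nonneg_left (le_of_lt hz) hn'.le
  have hexp : -(n * ε) ^ 2 / (8 * n * (1 + 2 * P)) = -(n * ε ^ 2) / (8 * (1 + 2 * P)) := by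
    field_simp
  refine (measure_mono hsub).trans ?_
  rw [← hexp]
  exact stdGaussian_abs_sum_sq_add_sub_ge_le hP hx (by positivity) (by nlinarith)

lemma sphereUniform_prod_stdGaussian_abs_mean_sum_sq_add_sub_gt_le {n : ℕ} (hn : 0 < n) {P : ℝ}
    (hP : 0 ≤ P) {ε : ℝ} (hε₀ : 0 ≤ ε) (hε : ε ≤ 2 * (1 + 2 * P) / 5) :
    (sphereUniform n P).prod (stdGaussian n)
        {p | |(1 / n : ℝ) * ∑ i, (p.1 i + p.2 i) ^ 2 - (P + 1)| > ε} ≤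
      ENNReal.ofReal (2 * exp (-(n * ε ^ 2) / (8 * (1 + 2 * P)))) := by
  refine Measure.prod_apply_le_of_ae_le (measurableSet_lt measurable_const (by fun_prop)) ?_
  filter_upwards [ae_sum_sq_eq_sphereUniform n hP] with x hx
  exact stdGaussian_abs_mean_sum_sq_add_sub_gt_le hn hP hx hε₀ hε

lemma two_mul_exp_neg_two_mul_le_exp_neg {a : ℝ} (ha : 1 ≤ a) : 2 * exp (-(2 * a)) ≤ exp (-a) :=
  calc 2 * exp (-(2 * a)) ≤ exp a * exp (-(2 * a)) := by
        gcongr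
        linarith [add_one_le_exp a]
    _ = exp (-a) := by
        rw [← exp_add]
        ring_nf

/-- For `X` uniform on the power sphere, `Z` standard Gaussian independent of `X` and
`Y = X + Z`, the squared norm `(1/n)‖Y‖₂²` concentrates around `P + 1`. -/
theorem output_norm_concentration (P : ℝ) (hP : 0 < P) :
    ∃ κ > (0 : ℝ), ∃ N : ℕ, ∀ n : ℕ, n ≥ N →
      ((sphereUniform n P).prod (stdGaussian n))
          {p | |(1 / n : ℝ) * ∑ i, (p.1 i + p.2 i) ^ 2 - (P + 1)| > (n : ℝ) ^ (-(1 / 3) : ℝ)}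
        ≤ ENNReal.ofReal (Real.exp (-κ * (n : ℝ) ^ ((1 : ℝ) / 3))) := by
  set K := 1 + 2 * P
  refine ⟨1 / (16 * K), by positivity, ⌈16 * K⌉₊ ^ 3, fun n hn => ?_⟩
  set T := (n : ℝ) ^ ((1 : ℝ) / 3) with hT_def
  have hTK : 16 * K ≤ T :=
    calc 16 * K ≤ ⌈16 * K⌉₊ := Nat.le_ceil _
      _ = ((⌈16 * K⌉₊ : ℝ) ^ 3) ^ ((1 : ℝ) / 3) := by
        rw [← rpow_natCast, ← rpow_mul (by positivity)]
        norm_num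
      _ ≤ T := rpow_le_rpow (by positivity) (by exact_mod_cast hn) (by norm_num)
  have hnT : (n : ℝ) = T ^ 3 := by
    rw [hT_def, ← rpow_natCast, ← rpow_mul (Nat.cast_nonneg n)]
    norm_num
  have hT : 0 < T := by linarith
  rw [rpow_neg (Nat.cast_nonneg n)]
  refine (sphereUniform_prod_stdGaussian_abs_mean_sum_sq_add_sub_gt_le
    (by exact_mod_cast (show (0 : ℝ) < n by rw [hnT]; positivity)) hP.le (by positivity)
    (by rw [inv_le_iff_one_le_mul₀ hT]; nlinarith)).trans (ENNReal.ofReal_le_ofReal ?_)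
  have hexponent : -(n * (T⁻¹) ^ 2) / (8 * K) = -(2 * (T / (16 * K))) := by
    rw [hnT]
    field_simp
    ring
  rw [hexponent, show -(1 / (16 * K)) * T = -(T / (16 * K)) by ring]
  exact two_mul_exp_neg_two_mul_le_exp_neg ((le_div_iff₀ (by positivity)).mpr (by linarith))

end
end

section
/- Let Q be a real-valued random variable, and suppose there exist constants K > 0 and n > 0 such that for every a ∈ ℝ and every μ > 0, Pr( Q ∈ [a, a+μ] ) ≤ K·μ/√n. Then for every t ∈ ℝ, E[ exp(−Q)·1{Q ≥ t} ] ≤ (2·log 2)·K·exp(−t)/√n. -/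
/-!
Slice `[t, ∞)` into the windows `[t + kη, t + (k+1)η)`. On the `k`-th window `exp (-Q)` is at
most `exp (-t) * exp (-η) ^ k`, and the window has probability at most `K η / √n`, so the
integral is bounded by a geometric series with sum `exp (-t) / (1 - exp (-η)) * K η / √n`.
For `η = log 2` the factor `1 / (1 - exp (-η))` equals `2`.
-/

open MeasureTheory Real
open Set Function

section IcoSlices

variable {α : Type*} [AddCommGroup α] [LinearOrder α] [IsOrderedAddMonoid α]

theorem pairwise_disjoint_Ico_add_nsmul (a p : α) :
    Pairwise (Disjoint on fun k : ℕ => Ico (a + k • p) (a + (k + 1) • p)) := by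
  intro k l hkl
  have := pairwise_disjoint_Ico_add_zsmul a p (Nat.cast_injective.ne hkl : (k : ℤ) ≠ l)
  simpa only [onFun, ← Nat.cast_succ, natCast_zsmul] using this

theorem iUnion_Ico_add_nsmul [Archimedean α] {p : α} (hp : 0 < p) (a : α) :
    ⋃ k : ℕ, Ico (a + k • p) (a + (k + 1) • p) = Ici a := by
  refine Subset.antisymm (iUnion_subset fun k b hb => ?_) fun b hb => ?_
  · exact le_add_of_nonneg_right (nsmul_nonneg hp.le k) |>.trans hb.1
  · obtain ⟨n, hn⟩ := mem_iUnion.mp ((iUnion_Ico_add_zsmul hp a).ge (mem_univ b))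
    have hn0 : 0 ≤ n := by
      have : (0 : ℤ) • p < (n + 1) • p := by simpa using (hb : a ≤ b).trans_lt hn.2
      have := (zsmul_lt_zsmul_iff_left hp).mp this
      omega
    lift n to ℕ using hn0
    exact mem_iUnion.mpr ⟨n, by simpa only [← Nat.cast_succ, natCast_zsmul] using hn⟩

end IcoSlices

theorem setIntegral_preimage_Ici_le_of_measureReal_Ico_le {Ω : Type*} [MeasurableSpace Ω]
    {μ : Measure Ω} [IsFiniteMeasure μ] {Q : Ω → ℝ} (hQ : Measurable Q) {η C : ℝ} {f : ℝ → ℝ}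
    (hf : Antitone f) (hf0 : 0 ≤ f) (hη : 0 < η)
    (hC : ∀ a, μ.real (Q ⁻¹' Ico a (a + η)) ≤ C) {t s : ℝ}
    (hs : HasSum (fun k : ℕ => f (t + k • η)) s) :
    ∫ ω in Q ⁻¹' Ici t, f (Q ω) ∂μ ≤ C * s := by
  set S : ℕ → Set Ω := fun k => Q ⁻¹' Ico (t + k • η) (t + (k + 1) • η)
  have hS : ∀ k, MeasurableSet (S k) := fun k => hQ measurableSet_Ico
  have hunion : ⋃ k, S k = Q ⁻¹' Ici t := by
    simp only [S, ← preimage_iUnion, iUnion_Ico_add_nsmul hη]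
  have hint : IntegrableOn (fun ω => f (Q ω)) (Q ⁻¹' Ici t) μ := by
    refine Measure.integrableOn_of_bounded (M := f t) (measure_ne_top _ _)
      (hf.measurable.comp hQ).aestronglyMeasurable ?_
    refine (ae_restrict_iff' (hQ measurableSet_Ici)).mpr (.of_forall fun ω hω => ?_)
    rw [Real.norm_of_nonneg (hf0 _)]
    exact hf hω
  have hslice : ∀ k : ℕ, ∫ ω in S k, f (Q ω) ∂μ ≤ C * f (t + k • η) := fun k => calc
    ∫ ω in S k, f (Q ω) ∂μ ≤ f (t + k • η) * μ.real (S k) := by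
      refine (Real.le_norm_self _).trans
        (norm_setIntegral_le_of_norm_le_const (measure_lt_top _ _) fun ω hω => ?_)
      rw [Real.norm_of_nonneg (hf0 _)]
      exact hf hω.1
    _ ≤ f (t + k • η) * C := by
      gcongr
      · exact hf0 _
      · simpa only [S, succ_nsmul, add_assoc] using hC (t + k • η)
    _ = C * f (t + k • η) := mul_comm _ _
  rw [← hunion] at hint ⊢
  have hdisj : Pairwise (Disjoint on S) :=
    (pairwise_disjoint_Ico_add_nsmul t η).mono fun _ _ h => h.preimage Q
  exact hasSum_le hslice (hasSum_integral_iUnion hS hdisj hint) (hs.mul_left C)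

theorem hasSum_exp_neg_add_nsmul (t η : ℝ) (hη : 0 < η) :
    HasSum (fun k : ℕ => exp (-(t + k • η))) (exp (-t) / (1 - exp (-η))) := by
  have hgeom := (hasSum_geometric_of_lt_one (exp_pos (-η)).le
    (exp_lt_one_iff.mpr (neg_neg_of_pos hη))).mul_left (exp (-t))
  have hterm (k : ℕ) : exp (-(t + k • η)) = exp (-t) * exp (-η) ^ k := by
    rw [nsmul_eq_mul, neg_add, exp_add, ← exp_nat_mul, mul_neg]
  simpa only [hterm, div_eq_mul_inv] using hgeom

theorem setIntegral_exp_neg_preimage_Ici_le {Ω : Type*} [MeasurableSpace Ω] {μ : Measure Ω}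
    [IsFiniteMeasure μ] {Q : Ω → ℝ} (hQ : Measurable Q) {η C : ℝ} (hη : 0 < η)
    (hC : ∀ a, μ.real (Q ⁻¹' Ico a (a + η)) ≤ C) (t : ℝ) :
    ∫ ω in Q ⁻¹' Ici t, exp (-Q ω) ∂μ ≤ C * (exp (-t) / (1 - exp (-η))) :=
  setIntegral_preimage_Ici_le_of_measureReal_Ico_le hQ
    (fun _ _ h => exp_le_exp.mpr (neg_le_neg h)) (fun _ => (exp_pos _).le) hη hC
    (hasSum_exp_neg_add_nsmul t η hη)

theorem exp_indicator_expectation_bound_general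
    {Ω : Type*} [MeasurableSpace Ω] (ℙ : Measure Ω) [IsProbabilityMeasure ℙ]
    (Q : Ω → ℝ) (hQ : Measurable Q) (K n : ℝ)
    (h : ∀ a μ : ℝ, 0 < μ →
      (ℙ {ω | Q ω ∈ Set.Icc a (a + μ)}).toReal ≤ K * μ / Real.sqrt n) :
    ∀ t : ℝ,
      ∫ ω in {ω | t ≤ Q ω}, Real.exp (-Q ω) ∂ℙ
        ≤ 2 * Real.log 2 * K * Real.exp (-t) / Real.sqrt n := by
  intro t
  have hη : 0 < log 2 := log_pos one_lt_two
  have hC (a : ℝ) : ℙ.real (Q ⁻¹' Ico a (a + log 2)) ≤ K * log 2 / √n :=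
    (measureReal_mono (preimage_mono Ico_subset_Icc_self)).trans (h a _ hη)
  have hhalf : 1 - exp (-log 2) = 2⁻¹ := by rw [exp_neg, exp_log two_pos]; norm_num
  calc ∫ ω in {ω | t ≤ Q ω}, exp (-Q ω) ∂ℙ
      ≤ K * log 2 / √n * (exp (-t) / (1 - exp (-log 2))) :=
        setIntegral_exp_neg_preimage_Ici_le hQ hη hC t
    _ = 2 * log 2 * K * exp (-t) / √n := by rw [hhalf]; ring

/-- If all interval probabilities `Pr(Q ∈ [a, a+μ])` are bounded by `K μ/√n`, then
`E[exp(-Q) 1{Q ≥ t}] ≤ (2 log 2) K exp(-t)/√n` for every `t`. -/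
theorem exp_indicator_expectation_bound
    {Ω : Type*} [MeasurableSpace Ω] (ℙ : Measure Ω) [IsProbabilityMeasure ℙ]
    (Q : Ω → ℝ) (hQ : Measurable Q) (K n : ℝ) (hK : 0 < K) (hn : 0 < n)
    (h : ∀ a μ : ℝ, 0 < μ →
      (ℙ {ω | Q ω ∈ Set.Icc a (a + μ)}).toReal ≤ K * μ / Real.sqrt n) :
    ∀ t : ℝ,
      ∫ ω in {ω | t ≤ Q ω}, Real.exp (-Q ω) ∂ℙ
        ≤ 2 * Real.log 2 * K * Real.exp (-t) / Real.sqrt n :=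
  exp_indicator_expectation_bound_general ℙ Q hQ K n h
end

section
/- Fix P > 0 and φ ∈ (0, π/2). Define G(φ) = (1/2)·( √P·cos φ + √(P·cos²φ + 4) ) and F(φ) = P/2 − (√P·G(φ)·cos φ)/2 − log( G(φ)·sin φ ). Define, for R > 0 with β := exp(2R) > 1, the sphere-packing exponent E(R) = (P/(4β))·( (β+1) − (β−1)·√(1 + 4β/(P(β−1))) ) + (1/2)·log( β − (P(β−1)/2)·( √(1 + 4β/(P(β−1))) − 1 ) ). Then F(φ) = E(R̃(φ)) where R̃(φ) = −log sin φ. -/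
/-!
With `x = √P cos φ`, the number `G(φ)` is the positive root of `g² = x g + 1`, and the rate
`R̃(φ)` corresponds to `β = exp (2 R̃) = 1 / sin² φ`, so that `x² β = P (β - 1)`. Under this
relation the square root in `E` is rational in `x` and `g`, namely `√(x² + 4) / x = (2g - x) / x`,
and the identity `g - x = 1 / g` collapses the argument of the logarithm in `E` to `β / g²`.
-/

open Real

noncomputable section

def metallicMean (x : ℝ) : ℝ := (x + √(x ^ 2 + 4)) / 2

/-- `E(R)` written as a function of `β = exp (2 R)`. -/
def spherePackingExponent (P β : ℝ) : ℝ :=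
  P / (4 * β) * ((β + 1) - (β - 1) * √(1 + 4 * β / (P * (β - 1)))) +
    1 / 2 * log (β - P * (β - 1) / 2 * (√(1 + 4 * β / (P * (β - 1))) - 1))

theorem metallicMean_pos (x : ℝ) : 0 < metallicMean x := by
  have hx : |x| < √(x ^ 2 + 4) := by
    rw [← sqrt_sq_eq_abs]
    exact sqrt_lt_sqrt (sq_nonneg x) (by linarith)
  unfold metallicMean
  linarith [neg_abs_le x]

theorem metallicMean_sq (x : ℝ) : metallicMean x ^ 2 = x * metallicMean x + 1 := by
  have hroot : √(x ^ 2 + 4) ^ 2 = x ^ 2 + 4 := sq_sqrt (by positivity)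
  unfold metallicMean
  linear_combination hroot / 4

theorem sqrt_sq_add_four (x : ℝ) : √(x ^ 2 + 4) = 2 * metallicMean x - x := by
  unfold metallicMean
  ring

section

variable {P β x : ℝ}

theorem sqrt_one_add_div_of_sq_mul_eq (hx : 0 < x) (hβ : β ≠ 0) (hrel : x ^ 2 * β = P * (β - 1)) :
    √(1 + 4 * β / (P * (β - 1))) = (2 * metallicMean x - x) / x := by
  have hquot : 1 + 4 * β / (P * (β - 1)) = (x ^ 2 + 4) / x ^ 2 := by
    rw [← hrel]
    field_simp
  rw [hquot, sqrt_div' _ (sq_nonneg x), sqrt_sq hx.le, sqrt_sq_add_four]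

theorem spherePackingExponent_eq_of_sq_mul_eq (hx : 0 < x) (hβ : β ≠ 0)
    (hrel : x ^ 2 * β = P * (β - 1)) :
    spherePackingExponent P β =
      P / 2 - x * metallicMean x / 2 + 1 / 2 * log (β / metallicMean x ^ 2) := by
  set g := metallicMean x
  have hg : 0 < g := metallicMean_pos x
  have hPβ : P / β = P - x ^ 2 := by
    field_simp
    linarith
  have hlin : P / (4 * β) * ((β + 1) - (β - 1) * ((2 * g - x) / x)) = P / 2 - x * g / 2 :=
    calc _ = P / 4 + P / β / 4 - (P - P / β) * (2 * g - x) / (4 * x) := by field_simp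
      _ = P / 2 - x * g / 2 := by rw [hPβ]; field_simp; ring
  have hinv_sq : 1 - x * (g - x) = (g ^ 2)⁻¹ := by
    field_simp
    linear_combination (1 - x * g) * metallicMean_sq x
  have hlog : β - P * (β - 1) / 2 * ((2 * g - x) / x - 1) = β / g ^ 2 :=
    calc _ = β * (1 - x * (g - x)) := by rw [← hrel]; field_simp; ring
      _ = β / g ^ 2 := by rw [hinv_sq]; ring
  rw [spherePackingExponent, sqrt_one_add_div_of_sq_mul_eq hx hβ hrel, hlin, hlog]

end

theorem exp_two_mul_neg_log {s : ℝ} (hs : 0 < s) : exp (2 * -log s) = (s ^ 2)⁻¹ := by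
  rw [mul_neg, exp_neg, ← log_rpow hs, exp_log (rpow_pos_of_pos hs 2), rpow_two]

/-- Shannon's cone-angle exponent `F(φ)` equals the sphere-packing exponent `E(R)` of the
AWGN channel at rate `R̃(φ) = -log sin φ`. -/
theorem shannon_exponent_eq_sphere_packing (P φ : ℝ) (hP : 0 < P)
    (hφ : φ ∈ Set.Ioo (0 : ℝ) (π / 2)) :
    let G : ℝ := (Real.sqrt P * Real.cos φ + Real.sqrt (P * Real.cos φ ^ 2 + 4)) / 2
    let F : ℝ := P / 2 - Real.sqrt P * G * Real.cos φ / 2 - Real.log (G * Real.sin φ)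
    let E : ℝ → ℝ := fun R =>
      P / (4 * Real.exp (2 * R)) *
          ((Real.exp (2 * R) + 1) -
            (Real.exp (2 * R) - 1) *
              Real.sqrt (1 + 4 * Real.exp (2 * R) / (P * (Real.exp (2 * R) - 1)))) +
        (1 / 2) * Real.log (Real.exp (2 * R) -
          P * (Real.exp (2 * R) - 1) / 2 *
            (Real.sqrt (1 + 4 * Real.exp (2 * R) / (P * (Real.exp (2 * R) - 1))) - 1))
    F = E (-Real.log (Real.sin φ)) := by
  intro G F E
  obtain ⟨hφ0, hφπ⟩ := hφ
  have hs : 0 < sin φ := sin_pos_of_pos_of_lt_pi hφ0 (by linarith [pi_pos])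
  have hc : 0 < cos φ := cos_pos_of_mem_Ioo ⟨by linarith [pi_pos], hφπ⟩
  have hG : G = metallicMean (√P * cos φ) := by
    simp only [G, metallicMean, mul_pow, sq_sqrt hP.le]
  have hE : E (-log (sin φ)) = spherePackingExponent P (sin φ ^ 2)⁻¹ := by
    simp only [E, exp_two_mul_neg_log hs, spherePackingExponent]
  have hrel : (√P * cos φ) ^ 2 * (sin φ ^ 2)⁻¹ = P * ((sin φ ^ 2)⁻¹ - 1) := by
    rw [mul_pow, sq_sqrt hP.le, cos_sq']
    field_simp
  have hlog : log ((sin φ ^ 2)⁻¹ / G ^ 2) = -(2 * log (G * sin φ)) := by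
    rw [show (sin φ ^ 2)⁻¹ / G ^ 2 = ((G * sin φ) ^ 2)⁻¹ by
      rw [mul_pow, mul_inv, div_eq_mul_inv, mul_comm], log_inv, log_pow]
    push_cast
    ring
  rw [hE, spherePackingExponent_eq_of_sq_mul_eq (by positivity) (by positivity) hrel, ← hG, hlog]
  ring

end
end
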